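/- Let f(z) = Σ_{k=-n}^{n} a_k z^k be a Laurent polynomial satisfying f(e^{iθ}) ≥ 0 for all θ. Then there exists a polynomial p of degree at most n such that f(e^{iθ}) = |p(e^{iθ})|² for all θ. -/

import Mathlib

open Complex Polynomial Finset Filter Topology

noncomputable def FRconj (N : ℕ) (q : Polynomial ℂ) : Polynomial ℂ :=
  ∑ j ∈ Finset.range (N+1), Polynomial.C ((starRingEnd ℂ) (q.coeff (N - j))) * Polynomial.X ^ j

lemma FRconj_eval (N : ℕ) (q : Polynomial ℂ) (hq : q.degree ≤ N) (z : ℂ) (hz : z ≠ 0) :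
    (FRconj N q).eval z = z^N * (starRingEnd ℂ) (q.eval (((starRingEnd ℂ) z)⁻¹)) := by
  have hnd : q.natDegree < N + 1 :=
    Nat.lt_succ_of_le (Polynomial.natDegree_le_iff_degree_le.mpr hq)
  rw [FRconj, Polynomial.eval_finset_sum]
  simp only [Polynomial.eval_mul, Polynomial.eval_C, Polynomial.eval_pow, Polynomial.eval_X]
  rw [Polynomial.eval_eq_sum_range' hnd, map_sum, Finset.mul_sum]
  rw [← Finset.sum_range_reflect (fun j => (starRingEnd ℂ) (q.coeff (N - j)) * z ^ j) (N+1)]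
  refine Finset.sum_congr rfl ?_
  intro j hj
  rw [Finset.mem_range] at hj
  have hjN : j ≤ N := Nat.lt_succ_iff.mp hj
  have h1 : N + 1 - 1 - j = N - j := by omega
  have h2 : N - (N - j) = j := by omega
  rw [h1, h2, map_mul, map_pow, map_inv₀, Complex.conj_conj]
  have h3 : z ^ (N - j) = z ^ N * (z⁻¹) ^ j := by
    rw [inv_pow, eq_comm, mul_inv_eq_iff_eq_mul₀ (pow_ne_zero j hz), ← pow_add]
    congr 1; omega
  rw [h3]; ring

lemma FRconj_coeff_top (N : ℕ) (q : Polynomial ℂ) :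
    (FRconj N q).coeff N = (starRingEnd ℂ) (q.coeff 0) := by
  rw [FRconj, Polynomial.finset_sum_coeff]
  simp only [Polynomial.coeff_C_mul, Polynomial.coeff_X_pow, mul_ite, mul_one, mul_zero]
  rw [Finset.sum_ite_eq (Finset.range (N+1)) N]
  simp

lemma FRcirc_conj (θ : ℝ) : (starRingEnd ℂ) (Complex.exp (θ * Complex.I)) *
    Complex.exp (θ * Complex.I) = 1 := by
  rw [mul_comm, Complex.mul_conj, ← Complex.sq_norm, Complex.norm_exp_ofReal_mul_I]
  norm_num

lemma FRcirc_ne_zero (θ : ℝ) : Complex.exp (θ * Complex.I) ≠ 0 := Complex.exp_ne_zero _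

lemma FRcirc_inv_conj (θ : ℝ) : ((starRingEnd ℂ) (Complex.exp (θ * Complex.I)))⁻¹ =
    Complex.exp (θ * Complex.I) := by
  rw [inv_eq_iff_eq_inv, eq_comm, inv_eq_of_mul_eq_one_right]
  rw [mul_comm]; exact FRcirc_conj θ

lemma FRexp_inj : Set.InjOn (fun θ : ℝ => Complex.exp (θ * Complex.I)) (Set.Ioo 0 1) := by
  intro x hx y hy hxy
  simp only at hxy
  have h1 : Complex.exp ((x - y : ℝ) * Complex.I) = 1 := by
    push_cast
    rw [sub_mul, Complex.exp_sub, hxy, div_self (FRcirc_ne_zero y)]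
  rw [Complex.exp_eq_one_iff] at h1
  obtain ⟨k, hk⟩ := h1
  have hI : ((x - y : ℝ) : ℂ) = (k : ℂ) * (2 * Real.pi) := by
    apply mul_right_cancel₀ Complex.I_ne_zero
    rw [hk]; ring
  have hreal : (x - y : ℝ) = (k : ℝ) * (2 * Real.pi) := by exact_mod_cast hI
  have hpi : (1:ℝ) < 2 * Real.pi := by nlinarith [Real.pi_gt_three]
  obtain ⟨hx1, hx2⟩ := hx; obtain ⟨hy1, hy2⟩ := hy
  have hb : |x - y| < 1 := by rw [abs_lt]; constructor <;> linarith
  have hk0 : k = 0 := by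
    by_contra hk0
    have h1le : (1:ℝ) ≤ |(k:ℝ)| := by
      rw [← Int.cast_abs]
      exact_mod_cast Int.one_le_abs (by omega)
    rw [hreal, abs_mul, abs_of_pos (show (0:ℝ) < 2*Real.pi by linarith)] at hb
    nlinarith
  rw [hk0] at hreal; simp at hreal; linarith

lemma FRconj_eq (N : ℕ) (q : Polynomial ℂ) (hq : q.degree ≤ N)
    (h : ∀ θ : ℝ, (Complex.exp (θ * Complex.I))^N *
      (starRingEnd ℂ) (q.eval (Complex.exp (θ * Complex.I))) =
      q.eval (Complex.exp (θ * Complex.I))) :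
    FRconj N q = q := by
  apply Polynomial.eq_of_infinite_eval_eq
  apply Set.Infinite.mono (s := (fun θ : ℝ => Complex.exp (θ * Complex.I)) '' (Set.Ioo 0 1))
  · rintro z ⟨θ, _, rfl⟩
    simp only [Set.mem_setOf_eq]
    rw [FRconj_eval N q hq _ (FRcirc_ne_zero θ), FRcirc_inv_conj θ]
    exact h θ
  · apply Set.Infinite.image FRexp_inj
    have : Infinite (Set.Ioo (0:ℝ) 1) := Set.Ioo.infinite (by norm_num)
    exact Set.infinite_coe_iff.mp this
open Complex Polynomial Finset Filter Topology

lemma FRcont (m : ℕ) (u : Polynomial ℂ) :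
    Continuous fun θ : ℝ => Complex.exp (-(m:ℂ) * θ * Complex.I) *
      u.eval (Complex.exp (θ * Complex.I)) := by
  apply Continuous.mul
  · apply Complex.continuous_exp.comp
    exact ((continuous_const.mul Complex.continuous_ofReal).mul continuous_const)
  · exact u.continuous.comp (Complex.continuous_exp.comp
      (Complex.continuous_ofReal.mul continuous_const))

/-- If `e^{-imθ}(e^{iθ}-r)u(e^{iθ})` is real nonnegative for all `θ` and `|r|=1`,
then `u(r) = 0`. -/
lemma FRdouble (m : ℕ) (u : Polynomial ℂ) (r : ℂ) (hr : ‖r‖ = 1)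
    (him : ∀ θ : ℝ, (Complex.exp (-(m:ℂ) * θ * Complex.I) *
      ((Complex.exp (θ * Complex.I) - r) * u.eval (Complex.exp (θ * Complex.I)))).im = 0)
    (hre : ∀ θ : ℝ, 0 ≤ (Complex.exp (-(m:ℂ) * θ * Complex.I) *
      ((Complex.exp (θ * Complex.I) - r) * u.eval (Complex.exp (θ * Complex.I)))).re) :
    u.eval r = 0 := by
  by_contra hu
  have hr0 : r ≠ 0 := by
    intro h; rw [h] at hr; simp at hr
  -- r = exp(θ0 * I)
  obtain ⟨θ0, hθ0⟩ : ∃ θ0 : ℝ, Complex.exp (θ0 * Complex.I) = r := by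
    refine ⟨r.arg, ?_⟩
    have := Complex.norm_mul_exp_arg_mul_I r
    rwa [hr, Complex.ofReal_one, one_mul] at this
  set c : ℝ → ℂ := fun θ => Complex.exp (θ * Complex.I) with hc
  set g : ℝ → ℂ := fun θ => Complex.exp (-(m:ℂ) * θ * Complex.I) * ((c θ - r) * u.eval (c θ))
    with hgdef
  set h : ℝ → ℂ := fun θ => Complex.exp (-(m:ℂ) * θ * Complex.I) * u.eval (c θ) with hhdef
  have hcont : Continuous h := FRcont m u
  -- derivative of c at θ0
  have hder : HasDerivAt c (Complex.exp (θ0 * Complex.I) * Complex.I) θ0 := by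
    have h1 : HasDerivAt (fun z : ℂ => Complex.exp (z * Complex.I))
        (Complex.exp ((θ0:ℂ) * Complex.I) * Complex.I) (θ0 : ℂ) := by
      simpa using ((hasDerivAt_id (θ0:ℂ)).mul_const Complex.I).cexp
    exact h1.comp_ofReal
  have hslope : Tendsto (slope c θ0) (𝓝[≠] θ0) (𝓝 (Complex.exp (θ0 * Complex.I) * Complex.I)) :=
    hasDerivAt_iff_tendsto_slope.mp hder
  -- h tendsto
  have hh : Tendsto h (𝓝[≠] θ0) (𝓝 (h θ0)) :=
    (hcont.tendsto θ0).mono_left nhdsWithin_le_nhds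
  set L : ℂ := Complex.exp (θ0 * Complex.I) * Complex.I * h θ0 with hL
  have hLne : L ≠ 0 := by
    apply mul_ne_zero (mul_ne_zero (Complex.exp_ne_zero _) Complex.I_ne_zero)
    apply mul_ne_zero (Complex.exp_ne_zero _)
    have hcr : c θ0 = r := hθ0
    rw [hcr]; exact hu
  have hgs : ∀ θ : ℝ, θ ≠ θ0 → (θ - θ0)⁻¹ • g θ = slope c θ0 θ * h θ := by
    intro θ hθ
    rw [slope_def_module]
    have hcr : c θ0 = r := hθ0
    have : g θ = (c θ - c θ0) * h θ := by
      simp only [hgdef, hhdef, hcr]; ring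
    rw [this]
    rw [Complex.real_smul]
    push_cast
    field_simp
    rw [Complex.real_smul]; push_cast; ring
  have hT : Tendsto (fun θ => (θ - θ0)⁻¹ • g θ) (𝓝[≠] θ0) (𝓝 L) := by
    apply Tendsto.congr' _ (hslope.mul hh)
    filter_upwards [self_mem_nhdsWithin] with θ hθ
    exact (hgs θ hθ).symm
  -- imaginary part
  have hTim : Tendsto (fun θ => ((θ - θ0)⁻¹ • g θ).im) (𝓝[≠] θ0) (𝓝 L.im) :=
    (Complex.continuous_im.tendsto L).comp hT
  have hLim : L.im = 0 := by
    have : Tendsto (fun _ : ℝ => (0:ℝ)) (𝓝[≠] θ0) (𝓝 0) := tendsto_const_nhds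
    refine tendsto_nhds_unique (hTim.congr ?_) this
    intro θ
    rw [Complex.smul_im, him θ, smul_zero]
  -- real part from the right
  have hTre : Tendsto (fun θ => ((θ - θ0)⁻¹ • g θ).re) (𝓝[≠] θ0) (𝓝 L.re) :=
    (Complex.continuous_re.tendsto L).comp hT
  have hright : 0 ≤ L.re := by
    have hTre' : Tendsto (fun θ => ((θ - θ0)⁻¹ • g θ).re) (𝓝[>] θ0) (𝓝 L.re) :=
      hTre.mono_left (nhdsWithin_mono θ0 (fun x hx => ne_of_gt hx))
    apply ge_of_tendsto hTre'
    filter_upwards [self_mem_nhdsWithin] with θ hθ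
    rw [Complex.smul_re]
    have : (0:ℝ) < θ - θ0 := sub_pos.mpr hθ
    exact mul_nonneg (by positivity) (hre θ)
  have hleft : L.re ≤ 0 := by
    have hTre' : Tendsto (fun θ => ((θ - θ0)⁻¹ • g θ).re) (𝓝[<] θ0) (𝓝 L.re) :=
      hTre.mono_left (nhdsWithin_mono θ0 (fun x hx => ne_of_lt hx))
    apply le_of_tendsto hTre'
    filter_upwards [self_mem_nhdsWithin] with θ hθ
    rw [Complex.smul_re]
    have h1 : θ - θ0 < 0 := sub_neg.mpr hθ
    have : (θ - θ0)⁻¹ ≤ 0 := le_of_lt (inv_neg''.mpr h1)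
    exact mul_nonpos_of_nonpos_of_nonneg this (hre θ)
  exact hLne (Complex.ext (le_antisymm hleft hright) hLim)
open Complex Polynomial Finset Filter Topology

lemma FRdense (r : ℂ) : Dense {θ : ℝ | Complex.exp (θ * Complex.I) ≠ r} := by
  have hcnt : Set.Countable {θ : ℝ | Complex.exp (θ * Complex.I) = r} := by
    by_cases hB : {θ : ℝ | Complex.exp (θ * Complex.I) = r}.Nonempty
    · obtain ⟨θs, hθs⟩ := hB
      simp only [Set.mem_setOf_eq] at hθs
      apply Set.Countable.mono (s₂ := Set.range (fun k : ℤ => θs + k * (2 * Real.pi)))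
      · intro θ hθ
        simp only [Set.mem_setOf_eq] at hθ
        have h1 : Complex.exp ((θ - θs : ℝ) * Complex.I) = 1 := by
          push_cast
          rw [sub_mul, Complex.exp_sub, hθ, hθs]
          apply div_self
          rw [← hθ]; exact Complex.exp_ne_zero _
        rw [Complex.exp_eq_one_iff] at h1
        obtain ⟨k, hk⟩ := h1
        refine ⟨k, ?_⟩
        have hI : ((θ - θs : ℝ) : ℂ) = (k : ℂ) * (2 * Real.pi) := by
          apply mul_right_cancel₀ Complex.I_ne_zero
          rw [hk]; ring
        have : θ - θs = (k : ℝ) * (2 * Real.pi) := by exact_mod_cast hI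
        simp only
        linarith
      · exact Set.countable_range _
    · rw [Set.not_nonempty_iff_eq_empty] at hB
      rw [hB]; exact Set.countable_empty
  have := hcnt.dense_compl ℝ
  convert this using 1
  ext θ; simp

lemma FRdeg_helper {x : WithBot ℕ} {d : ℕ} (h : 1 + x ≤ ((d + 1 : ℕ) : WithBot ℕ)) :
    x ≤ (d : WithBot ℕ) := by
  cases x with
  | bot => exact bot_le
  | coe m =>
    have h2 : ((1 + m : ℕ) : WithBot ℕ) ≤ ((d + 1 : ℕ) : WithBot ℕ) := by
      push_cast
      exact h
    have h3 : 1 + m ≤ d + 1 := by exact_mod_cast h2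
    exact Nat.cast_le.mpr (by omega)



lemma FRdeg_helper2 {x : WithBot ℕ} {d : ℕ} (h : x ≤ (d : WithBot ℕ)) :
    1 + x ≤ ((d + 1 : ℕ) : WithBot ℕ) := by
  cases x with
  | bot => simp
  | coe m =>
    have hm : m ≤ d := by exact Nat.cast_le.mp (by exact_mod_cast h)
    have : ((1 + m : ℕ) : WithBot ℕ) ≤ ((d + 1 : ℕ) : WithBot ℕ) := Nat.cast_le.mpr (by omega)
    push_cast at this
    exact this

-- degree of (X - C r) * p
lemma FRdeg_mul {r : ℂ} {p : Polynomial ℂ} {d : ℕ} (hp : p.degree ≤ (d : WithBot ℕ)) :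
    ((Polynomial.X - Polynomial.C r) * p).degree ≤ ((d + 1 : ℕ) : WithBot ℕ) := by
  refine (Polynomial.degree_mul_le _ _).trans ?_
  rw [Polynomial.degree_X_sub_C]
  exact FRdeg_helper2 hp

-- extract factor degree bound
lemma FRdeg_factor {r : ℂ} {u q : Polynomial ℂ} {d : ℕ}
    (hqu : (Polynomial.X - Polynomial.C r) * u = q)
    (hdeg : q.degree ≤ ((d + 1 : ℕ) : WithBot ℕ)) : u.degree ≤ (d : WithBot ℕ) := by
  apply FRdeg_helper
  rw [← Polynomial.degree_X_sub_C r, ← Polynomial.degree_mul, hqu]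
  exact hdeg

lemma FRkey (n : ℕ) : ∀ q : Polynomial ℂ, q.degree ≤ ((2 * n : ℕ) : WithBot ℕ) →
    (∀ θ : ℝ, (Complex.exp (-(n:ℂ) * θ * Complex.I) *
      q.eval (Complex.exp (θ * Complex.I))).im = 0) →
    (∀ θ : ℝ, 0 ≤ (Complex.exp (-(n:ℂ) * θ * Complex.I) *
      q.eval (Complex.exp (θ * Complex.I))).re) →
    ∃ p : Polynomial ℂ, p.degree ≤ (n : WithBot ℕ) ∧ ∀ θ : ℝ,
      Complex.exp (-(n:ℂ) * θ * Complex.I) * q.eval (Complex.exp (θ * Complex.I)) =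
        ((‖p.eval (Complex.exp (θ * Complex.I))‖ : ℝ) : ℂ) ^ 2 := by
  induction n with
  | zero =>
    intro q hdeg him hre
    rw [Nat.mul_zero, Nat.cast_zero] at hdeg
    have hc := Polynomial.eq_C_of_degree_le_zero hdeg
    refine ⟨Polynomial.C (Real.sqrt (q.coeff 0).re : ℂ), ?_, ?_⟩
    · exact Polynomial.degree_C_le
    · intro θ
      have h1 := him θ
      have h2 := hre θ
      rw [hc] at h1 h2
      simp only [Polynomial.eval_C, Nat.cast_zero, neg_zero, zero_mul, Complex.exp_zero,
        one_mul] at h1 h2 ⊢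
      conv_lhs => rw [hc, Polynomial.eval_C]
      rw [Complex.norm_real, Real.norm_eq_abs,
        _root_.abs_of_nonneg (Real.sqrt_nonneg _), ← Complex.ofReal_pow, Real.sq_sqrt h2]
      exact Complex.ext (by simp) (by simpa using h1)
  | succ n ih =>
    intro q hdeg him hre
    by_cases hq0 : q = 0
    · refine ⟨0, by simp, ?_⟩
      intro θ; simp [hq0]
    by_cases hdc : q.degree ≤ 0
    · exfalso
      have hc := Polynomial.eq_C_of_degree_le_zero hdc
      have h0 := him 0
      rw [hc] at h0
      simp only [Polynomial.eval_C, Complex.ofReal_zero, mul_zero, zero_mul,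
        Complex.exp_zero, one_mul] at h0
      -- h0 : (q.coeff 0).im = 0
      have h1 := him (Real.pi / (2 * (n + 1)))
      rw [hc] at h1
      simp only [Polynomial.eval_C] at h1
      have hexp : (-(↑(n+1):ℂ)) * ((Real.pi / (2 * (n+1)) : ℝ) : ℂ) * Complex.I
          = ((-(Real.pi/2) : ℝ) : ℂ) * Complex.I := by
        have hne : ((n:ℂ) + 1) ≠ 0 := by
          exact_mod_cast Nat.cast_add_one_ne_zero (R := ℂ) n
        push_cast
        field_simp
      rw [hexp] at h1
      have hexp2 : Complex.exp (((-(Real.pi/2) : ℝ) : ℂ) * Complex.I) = -Complex.I := by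
        rw [Complex.exp_mul_I, ← Complex.ofReal_cos, ← Complex.ofReal_sin]
        rw [Real.cos_neg, Real.sin_neg, Real.cos_pi_div_two, Real.sin_pi_div_two]
        push_cast
        ring
      rw [hexp2] at h1
      have hre0 : (q.coeff 0).re = 0 := by
        have : (-Complex.I * q.coeff 0).im = -(q.coeff 0).re := by
          simp [Complex.mul_im]
        rw [this] at h1; linarith
      apply hq0
      have : q.coeff 0 = 0 := Complex.ext (by simpa using hre0) (by simpa using h0)
      rw [hc, this]
      simp
    have hdpos : 0 < q.degree := lt_of_not_ge hdc
    obtain ⟨r, hroot⟩ := Complex.exists_root hdpos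
    -- conjugate-reflection identity
    have hdeg' : q.degree ≤ ((2 * (n+1) : ℕ) : WithBot ℕ) := hdeg
    have hQ : FRconj (2*(n+1)) q = q := by
      apply FRconj_eq _ _ hdeg'
      intro θ
      set z := Complex.exp (θ * Complex.I) with hz
      have h1 : (starRingEnd ℂ) (Complex.exp (-(↑(n+1):ℂ) * θ * Complex.I) * q.eval z)
          = Complex.exp (-(↑(n+1):ℂ) * θ * Complex.I) * q.eval z :=
        Complex.conj_eq_iff_im.mpr (him θ)
      rw [map_mul, ← Complex.exp_conj] at h1
      have hconjarg : (starRingEnd ℂ) (-(↑(n+1):ℂ) * θ * Complex.I)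
          = (↑(n+1):ℂ) * θ * Complex.I := by
        simp [map_mul, Complex.conj_I, Complex.conj_ofReal]
        ring
      rw [hconjarg] at h1
      have hzpow : z ^ (2*(n+1)) = Complex.exp ((↑(n+1):ℂ) * θ * Complex.I) *
          Complex.exp ((↑(n+1):ℂ) * θ * Complex.I) := by
        rw [← Complex.exp_add, hz, ← Complex.exp_nat_mul]
        congr 1
        push_cast
        ring
      rw [hzpow, mul_assoc, h1, ← mul_assoc, ← Complex.exp_add]
      have : (↑(n+1):ℂ) * θ * Complex.I + (-(↑(n+1):ℂ)) * θ * Complex.I = 0 := by ring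
      rw [this, Complex.exp_zero, one_mul]
    by_cases hr0 : r = 0
    · -- root at zero: top coefficient also vanishes, divide by X
      subst hr0
      have hc0 : q.coeff 0 = 0 := by
        have := hroot
        rwa [Polynomial.IsRoot, ← Polynomial.coeff_zero_eq_eval_zero] at this
      have hctop : q.coeff (2*(n+1)) = 0 := by
        rw [← hQ, FRconj_coeff_top, hc0, map_zero]
      have hdeg2 : q.degree ≤ ((2*n+1 : ℕ) : WithBot ℕ) := by
        rw [Polynomial.degree_le_iff_coeff_zero]
        intro m hm
        have hm' : 2*n+1 < m := by exact_mod_cast hm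
        by_cases hme : m = 2*(n+1)
        · rw [hme]; exact hctop
        · have : ((2*(n+1) : ℕ) : WithBot ℕ) < (m : WithBot ℕ) := by
            exact_mod_cast (by omega : 2*(n+1) < m)
          exact (Polynomial.degree_le_iff_coeff_zero q _).mp hdeg' m this
      set u := q / (Polynomial.X - Polynomial.C 0) with hu
      have hqu : (Polynomial.X - Polynomial.C 0) * u = q :=
        Polynomial.mul_div_eq_iff_isRoot.mpr hroot
      have hudeg : u.degree ≤ ((2*n : ℕ) : WithBot ℕ) := FRdeg_factor hqu hdeg2
      have hg : ∀ θ : ℝ, Complex.exp (-(n:ℂ) * θ * Complex.I) *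
          u.eval (Complex.exp (θ * Complex.I)) =
          Complex.exp (-(↑(n+1):ℂ) * θ * Complex.I) * q.eval (Complex.exp (θ * Complex.I)) := by
        intro θ
        rw [← hqu]
        simp only [Polynomial.eval_mul, Polynomial.eval_sub, Polynomial.eval_X,
          Polynomial.eval_C, map_zero, sub_zero]
        rw [← mul_assoc, ← Complex.exp_add]
        rw [show -(↑(n+1):ℂ) * θ * Complex.I + θ * Complex.I = -(n:ℂ) * θ * Complex.I by
          push_cast; ring]
      obtain ⟨p, hp, hpe⟩ := ih u hudeg
        (fun θ => by rw [hg θ]; exact him θ)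
        (fun θ => by rw [hg θ]; exact hre θ)
      refine ⟨p, hp.trans (Nat.cast_le.mpr (by omega)), ?_⟩
      intro θ
      rw [← hg θ]
      exact hpe θ
    by_cases habs : ‖r‖ = 1
    · -- root on the circle: it is (at least) a double root
      set u1 := q / (Polynomial.X - Polynomial.C r) with hu1
      have hqu1 : (Polynomial.X - Polynomial.C r) * u1 = q :=
        Polynomial.mul_div_eq_iff_isRoot.mpr hroot
      have hu1r : u1.eval r = 0 := by
        apply FRdouble (n+1) u1 r habs
        · intro θ
          have h2 := him θ
          rw [← hqu1] at h2
          simpa [Polynomial.eval_mul, mul_assoc] using h2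
        · intro θ
          have h2 := hre θ
          rw [← hqu1] at h2
          simpa [Polynomial.eval_mul, mul_assoc] using h2
      set u := u1 / (Polynomial.X - Polynomial.C r) with hu
      have hqu2 : (Polynomial.X - Polynomial.C r) * u = u1 :=
        Polynomial.mul_div_eq_iff_isRoot.mpr hu1r
      have hcast : (2*(n+1) : ℕ) = (2*n+1)+1 := by omega
      rw [hcast] at hdeg'
      have hu1deg : u1.degree ≤ ((2*n+1 : ℕ) : WithBot ℕ) := FRdeg_factor hqu1 hdeg'
      have hudeg : u.degree ≤ ((2*n : ℕ) : WithBot ℕ) := FRdeg_factor hqu2 hu1deg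
      have hrr : r * (starRingEnd ℂ) r = 1 := by
        rw [Complex.mul_conj, Complex.normSq_eq_norm_sq, habs]; norm_num
      set q' : Polynomial ℂ := Polynomial.C (-r) * u with hq'
      have hq'deg : q'.degree ≤ ((2*n : ℕ) : WithBot ℕ) := by
        refine (Polynomial.degree_mul_le _ _).trans ?_
        refine le_trans (add_le_add Polynomial.degree_C_le hudeg) ?_
        simp
      have hgid : ∀ θ : ℝ, Complex.exp (-(↑(n+1):ℂ) * θ * Complex.I) *
          q.eval (Complex.exp (θ * Complex.I)) =
          ((‖Complex.exp (θ * Complex.I) - r‖^2 : ℝ) : ℂ) *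
          (Complex.exp (-(n:ℂ) * θ * Complex.I) * q'.eval (Complex.exp (θ * Complex.I))) := by
        intro θ
        set z := Complex.exp (θ * Complex.I) with hzdef
        have hzz : z * (starRingEnd ℂ) z = 1 := by
          rw [Complex.mul_conj, Complex.normSq_eq_norm_sq, hzdef, Complex.norm_exp_ofReal_mul_I]
          norm_num
        have habs2 : ((‖z - r‖^2 : ℝ) : ℂ) = (z - r) * (starRingEnd ℂ) (z - r) := by
          rw [Complex.mul_conj, Complex.normSq_eq_norm_sq]
        have hstep : z - r = (-z*r) * ((starRingEnd ℂ) z - (starRingEnd ℂ) r) := by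
          linear_combination r * hzz - z * hrr
        have hexp1 : Complex.exp (-(n:ℂ) * θ * Complex.I) =
            Complex.exp (-(↑(n+1):ℂ) * θ * Complex.I) * z := by
          rw [hzdef, ← Complex.exp_add]; congr 1; push_cast; ring
        rw [← hqu1, ← hqu2]
        simp only [Polynomial.eval_mul, Polynomial.eval_sub, Polynomial.eval_X,
          Polynomial.eval_C, hq']
        rw [habs2, hexp1, map_sub]
        linear_combination (Complex.exp (-(↑(n+1):ℂ) * θ * Complex.I) * (z - r) * u.eval z) * hstep
      have hcont := FRcont n q'
      have hdense := FRdense r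
      have hD : ∀ θ : ℝ, Complex.exp (θ * Complex.I) ≠ r →
          0 < ‖Complex.exp (θ * Complex.I) - r‖^2 := by
        intro θ hθ
        have : Complex.exp (θ * Complex.I) - r ≠ 0 := sub_ne_zero.mpr hθ
        exact pow_pos (norm_pos_iff.mpr this) 2
      have him1 : ∀ θ : ℝ, (Complex.exp (-(n:ℂ) * θ * Complex.I) *
          q'.eval (Complex.exp (θ * Complex.I))).im = 0 := by
        have heq : (fun θ : ℝ => (Complex.exp (-(n:ℂ) * θ * Complex.I) *
            q'.eval (Complex.exp (θ * Complex.I))).im) = fun _ => 0 := by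
          apply Continuous.ext_on hdense (Complex.continuous_im.comp hcont) continuous_const
          intro θ hθ
          simp only [Set.mem_setOf_eq] at hθ
          have h2 := him θ
          rw [hgid θ, Complex.im_ofReal_mul] at h2
          have := (hD θ hθ).ne'
          exact (mul_eq_zero.mp h2).resolve_left this
        exact fun θ => congrFun heq θ
      have hre1 : ∀ θ : ℝ, 0 ≤ (Complex.exp (-(n:ℂ) * θ * Complex.I) *
          q'.eval (Complex.exp (θ * Complex.I))).re := by
        have hclosed : IsClosed {θ : ℝ | 0 ≤ (Complex.exp (-(n:ℂ) * θ * Complex.I) *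
            q'.eval (Complex.exp (θ * Complex.I))).re} :=
          isClosed_le continuous_const (Complex.continuous_re.comp hcont)
        have hsub : {θ : ℝ | Complex.exp (θ * Complex.I) ≠ r} ⊆
            {θ : ℝ | 0 ≤ (Complex.exp (-(n:ℂ) * θ * Complex.I) *
            q'.eval (Complex.exp (θ * Complex.I))).re} := by
          intro θ hθ
          simp only [Set.mem_setOf_eq] at hθ ⊢
          have h2 := hre θ
          rw [hgid θ, Complex.re_ofReal_mul] at h2
          exact (mul_nonneg_iff_of_pos_left (hD θ hθ)).mp h2
        have huniv : {θ : ℝ | 0 ≤ (Complex.exp (-(n:ℂ) * θ * Complex.I) *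
            q'.eval (Complex.exp (θ * Complex.I))).re} = Set.univ := by
          rw [← hclosed.closure_eq]
          exact (hdense.mono hsub).closure_eq
        intro θ
        exact Set.eq_univ_iff_forall.mp huniv θ
      obtain ⟨p₁, hp₁, hpe₁⟩ := ih q' hq'deg him1 hre1
      refine ⟨(Polynomial.X - Polynomial.C r) * p₁, FRdeg_mul hp₁, ?_⟩
      intro θ
      rw [hgid θ, hpe₁ θ, Polynomial.eval_mul, norm_mul]
      simp only [Polynomial.eval_sub, Polynomial.eval_X, Polynomial.eval_C]
      push_cast
      ring
    · -- root off the circle: pair it with 1/conj r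
      have hrc0 : (starRingEnd ℂ) r ≠ 0 := by
        simpa using hr0
      set s : ℂ := ((starRingEnd ℂ) r)⁻¹ with hs
      have hs0 : s ≠ 0 := inv_ne_zero hrc0
      have hsr1 : s * (starRingEnd ℂ) r = 1 := inv_mul_cancel₀ hrc0
      have hsroot : q.eval s = 0 := by
        have h1 : ((starRingEnd ℂ) s)⁻¹ = r := by
          rw [hs, map_inv₀, Complex.conj_conj, inv_inv]
        have h2 := FRconj_eval (2*(n+1)) q hdeg' s hs0
        rw [hQ, h1, hroot, map_zero, mul_zero] at h2
        exact h2
      have hssr : s ≠ r := by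
        intro heq
        apply habs
        have h1 : ‖s‖ = ‖r‖⁻¹ := by
          rw [hs, norm_inv, Complex.norm_conj]
        rw [heq] at h1
        have h2 : ‖r‖ ≠ 0 := by simpa using hr0
        have h3 : ‖r‖ * ‖r‖ = 1 := by
          field_simp at h1
          linarith [sq_nonneg ‖r‖]
        nlinarith [norm_nonneg r]
      set u1 := q / (Polynomial.X - Polynomial.C r) with hu1
      have hqu1 : (Polynomial.X - Polynomial.C r) * u1 = q :=
        Polynomial.mul_div_eq_iff_isRoot.mpr hroot
      have hu1s : u1.eval s = 0 := by
        have h1 : (s - r) * u1.eval s = 0 := by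
          rw [← hsroot, ← hqu1]
          simp [Polynomial.eval_mul]
        rcases mul_eq_zero.mp h1 with h2 | h2
        · exact absurd (sub_eq_zero.mp h2) hssr
        · exact h2
      set u := u1 / (Polynomial.X - Polynomial.C s) with hu
      have hqu2 : (Polynomial.X - Polynomial.C s) * u = u1 :=
        Polynomial.mul_div_eq_iff_isRoot.mpr hu1s
      have hcast : (2*(n+1) : ℕ) = (2*n+1)+1 := by omega
      rw [hcast] at hdeg'
      have hu1deg : u1.degree ≤ ((2*n+1 : ℕ) : WithBot ℕ) := FRdeg_factor hqu1 hdeg'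
      have hudeg : u.degree ≤ ((2*n : ℕ) : WithBot ℕ) := FRdeg_factor hqu2 hu1deg
      set q' : Polynomial ℂ := Polynomial.C (-s) * u with hq'
      have hq'deg : q'.degree ≤ ((2*n : ℕ) : WithBot ℕ) := by
        refine (Polynomial.degree_mul_le _ _).trans ?_
        refine le_trans (add_le_add Polynomial.degree_C_le hudeg) ?_
        simp
      have hgid : ∀ θ : ℝ, Complex.exp (-(↑(n+1):ℂ) * θ * Complex.I) *
          q.eval (Complex.exp (θ * Complex.I)) =
          ((‖Complex.exp (θ * Complex.I) - r‖^2 : ℝ) : ℂ) *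
          (Complex.exp (-(n:ℂ) * θ * Complex.I) * q'.eval (Complex.exp (θ * Complex.I))) := by
        intro θ
        set z := Complex.exp (θ * Complex.I) with hzdef
        have hzz : z * (starRingEnd ℂ) z = 1 := by
          rw [Complex.mul_conj, Complex.normSq_eq_norm_sq, hzdef, Complex.norm_exp_ofReal_mul_I]
          norm_num
        have habs2 : ((‖z - r‖^2 : ℝ) : ℂ) = (z - r) * (starRingEnd ℂ) (z - r) := by
          rw [Complex.mul_conj, Complex.normSq_eq_norm_sq]
        have hstep : z - s = (-z) * ((starRingEnd ℂ) z - (starRingEnd ℂ) r) * s := by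
          linear_combination s * hzz - z * hsr1
        have hexp1 : Complex.exp (-(n:ℂ) * θ * Complex.I) =
            Complex.exp (-(↑(n+1):ℂ) * θ * Complex.I) * z := by
          rw [hzdef, ← Complex.exp_add]; congr 1; push_cast; ring
        rw [← hqu1, ← hqu2]
        simp only [Polynomial.eval_mul, Polynomial.eval_sub, Polynomial.eval_X,
          Polynomial.eval_C, hq']
        rw [habs2, hexp1, map_sub]
        linear_combination (Complex.exp (-(↑(n+1):ℂ) * θ * Complex.I) * (z - r) * u.eval z) * hstep
      have hD : ∀ θ : ℝ, 0 < ‖Complex.exp (θ * Complex.I) - r‖^2 := by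
        intro θ
        have hne : Complex.exp (θ * Complex.I) - r ≠ 0 := by
          intro h
          apply habs
          rw [← sub_eq_zero.mp h, Complex.norm_exp_ofReal_mul_I]
        exact pow_pos (norm_pos_iff.mpr hne) 2
      have him1 : ∀ θ : ℝ, (Complex.exp (-(n:ℂ) * θ * Complex.I) *
          q'.eval (Complex.exp (θ * Complex.I))).im = 0 := by
        intro θ
        have h2 := him θ
        rw [hgid θ, Complex.im_ofReal_mul] at h2
        exact (mul_eq_zero.mp h2).resolve_left (hD θ).ne'
      have hre1 : ∀ θ : ℝ, 0 ≤ (Complex.exp (-(n:ℂ) * θ * Complex.I) *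
          q'.eval (Complex.exp (θ * Complex.I))).re := by
        intro θ
        have h2 := hre θ
        rw [hgid θ, Complex.re_ofReal_mul] at h2
        exact (mul_nonneg_iff_of_pos_left (hD θ)).mp h2
      obtain ⟨p₁, hp₁, hpe₁⟩ := ih q' hq'deg him1 hre1
      refine ⟨(Polynomial.X - Polynomial.C r) * p₁, FRdeg_mul hp₁, ?_⟩
      intro θ
      rw [hgid θ, hpe₁ θ, Polynomial.eval_mul, norm_mul]
      simp only [Polynomial.eval_sub, Polynomial.eval_X, Polynomial.eval_C]
      push_cast
      ring

/-- Fejér–Riesz: a Laurent polynomial `f(z) = Σ_{k=-n}^n a_k z^k` nonnegative on the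
unit circle is the squared modulus of a polynomial of degree at most `n`. -/
theorem fejer_riesz (n : ℕ) (a : ℤ → ℂ)
    (f : ℝ → ℂ)
    (hf : ∀ θ : ℝ, f θ = ∑ k ∈ Finset.Icc (-(n : ℤ)) n,
      a k * Complex.exp (k * θ * Complex.I))
    (hpos : ∀ θ : ℝ, (f θ).im = 0 ∧ 0 ≤ (f θ).re) :
    ∃ p : Polynomial ℂ, p.degree ≤ n ∧
      ∀ θ : ℝ, f θ = (‖p.eval (Complex.exp (θ * Complex.I))‖ : ℂ) ^ 2 := by
  set q : Polynomial ℂ := ∑ k ∈ Finset.Icc (-(n:ℤ)) n,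
    Polynomial.C (a k) * Polynomial.X ^ (k + n).toNat with hq
  have hdeg : q.degree ≤ ((2*n : ℕ) : WithBot ℕ) := by
    refine (Polynomial.degree_sum_le _ _).trans ?_
    apply Finset.sup_le
    intro k hk
    rw [Finset.mem_Icc] at hk
    refine (Polynomial.degree_mul_le _ _).trans ?_
    refine le_trans (add_le_add Polynomial.degree_C_le (Polynomial.degree_X_pow_le _)) ?_
    rw [zero_add]
    exact Nat.cast_le.mpr (by omega)
  have heval : ∀ θ : ℝ, Complex.exp (-(n:ℂ) * θ * Complex.I) *
      q.eval (Complex.exp (θ * Complex.I)) = f θ := by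
    intro θ
    rw [hf θ, hq, Polynomial.eval_finset_sum, Finset.mul_sum]
    apply Finset.sum_congr rfl
    intro k hk
    rw [Finset.mem_Icc] at hk
    have hk0 : (0:ℤ) ≤ k + n := by omega
    simp only [Polynomial.eval_mul, Polynomial.eval_C, Polynomial.eval_pow, Polynomial.eval_X]
    rw [← Complex.exp_nat_mul, mul_left_comm]
    congr 1
    rw [← Complex.exp_add]
    congr 1
    have hcast : (((k + n).toNat : ℕ) : ℂ) = (k : ℂ) + n := by
      have h1 : (((k + n).toNat : ℕ) : ℤ) = k + n := Int.toNat_of_nonneg hk0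
      have h2 := congrArg (fun z : ℤ => (z : ℂ)) h1
      push_cast at h2
      exact h2
    rw [hcast]
    ring
  obtain ⟨p, hp, hpe⟩ := FRkey n q hdeg
    (fun θ => by rw [heval θ]; exact (hpos θ).1)
    (fun θ => by rw [heval θ]; exact (hpos θ).2)
  exact ⟨p, hp, fun θ => by rw [← heval θ, hpe θ]⟩
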